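/- (Jacobian of the reversed flow is close to a ratio of porosities.) For every δ ∈ [0,T] and a.e. y ∈ Ω, |JF_{−δ}(y)| = φ(y)/φ(F_{−δ}(y)) + R(y), where the remainder R satisfies |R(y)| ≤ δ φ_*^{−1} Γ_div C₁(T) with C₁(T) = (φ^*/φ_*) exp(Γ_div T / φ_*). -/

import Mathlib

open MeasureTheory Set


/-- The image of a Lebesgue-null set under a Lipschitz-on map is null. -/
lemma aux_lipOn_image_null {d : ℕ} {K : NNReal}
    {f : EuclideanSpace ℝ (Fin d) → EuclideanSpace ℝ (Fin d)}
    {s : Set (EuclideanSpace ℝ (Fin d))} (hf : LipschitzOnWith K f s)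
    (hs : volume s = 0) : volume (f '' s) = 0 := by
  set e := (MeasurableEquiv.toLp 2 (Fin d → ℝ)).symm with he
  have hmap : MeasurePreserving (⇑e) := EuclideanSpace.volume_preserving_symm_measurableEquiv_toLp (Fin d)
  have key : ∀ X : Set (Fin d → ℝ), (volume : Measure (Fin d → ℝ)) X = volume (⇑e ⁻¹' X) := by
    intro X
    rw [← hmap.map_eq, MeasurableEquiv.map_apply]
  have hK₁ : LipschitzWith ‖((PiLp.continuousLinearEquiv 2 ℝ (fun _ : Fin d => ℝ)) :
      EuclideanSpace ℝ (Fin d) →L[ℝ] (Fin d → ℝ))‖₊ (⇑e) :=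
    ((PiLp.continuousLinearEquiv 2 ℝ (fun _ : Fin d => ℝ)) :
      EuclideanSpace ℝ (Fin d) →L[ℝ] (Fin d → ℝ)).lipschitz
  have hK₂ : LipschitzWith ‖(((PiLp.continuousLinearEquiv 2 ℝ (fun _ : Fin d => ℝ)).symm) :
      (Fin d → ℝ) →L[ℝ] EuclideanSpace ℝ (Fin d))‖₊ (⇑e.symm) :=
    (((PiLp.continuousLinearEquiv 2 ℝ (fun _ : Fin d => ℝ)).symm) :
      (Fin d → ℝ) →L[ℝ] EuclideanSpace ℝ (Fin d)).lipschitz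
  set g : (Fin d → ℝ) → (Fin d → ℝ) := ⇑e ∘ f ∘ ⇑e.symm with hg
  set t : Set (Fin d → ℝ) := ⇑e '' s with htdef
  have hmapsTo : MapsTo (⇑e.symm) t s := by
    rintro x ⟨y, hy, rfl⟩
    simpa using hy
  have hinner : LipschitzOnWith (K * _) (f ∘ ⇑e.symm) t :=
    hf.comp (hK₂.lipschitzOnWith) hmapsTo
  have hgL : LipschitzOnWith (_ * (K * _)) g t := hK₁.comp_lipschitzOnWith hinner
  have ht0 : (volume : Measure (Fin d → ℝ)) t = 0 := by
    rw [key, htdef, Set.preimage_image_eq s e.injective, hs]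
  have hH : (μH[(d:ℝ)] : Measure (Fin d → ℝ)) = volume := by
    simpa using (MeasureTheory.hausdorffMeasure_pi_real (ι := Fin d))
  have himg0 : (volume : Measure (Fin d → ℝ)) (g '' t) = 0 := by
    rw [← hH]
    refine le_antisymm ?_ zero_le
    calc μH[(d:ℝ)] (g '' t) ≤ _ * μH[(d:ℝ)] t := hgL.hausdorffMeasure_image_le (by positivity)
    _ = 0 := by rw [hH, ht0, mul_zero]
  have himg : g '' t = ⇑e '' (f '' s) := by
    show ((⇑e ∘ f) ∘ ⇑e.symm) '' (⇑e '' s) = _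
    rw [Set.image_comp (⇑e ∘ f) (⇑e.symm), ← Set.image_comp (⇑e.symm) (⇑e),
      Set.image_comp (⇑e) f]
    simp
  have : volume (⇑e ⁻¹' (⇑e '' (f '' s))) = 0 := by
    rw [← key, ← himg, himg0]
  rwa [Set.preimage_image_eq _ e.injective] at this

/-- The image of a null subset of an open set under a locally Lipschitz map is null. -/
lemma aux_image_null_of_locLip {d : ℕ} {U : Set (EuclideanSpace ℝ (Fin d))}
    (hU : IsOpen U) {f : EuclideanSpace ℝ (Fin d) → EuclideanSpace ℝ (Fin d)}
    (hloc : ∀ x ∈ U, ∃ ε > (0:ℝ), ∃ L : NNReal, LipschitzOnWith L f (Metric.ball x ε ∩ U))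
    {M : Set (EuclideanSpace ℝ (Fin d))} (hM : M ⊆ U) (hM0 : volume M = 0) :
    volume (f '' M) = 0 := by
  choose! ε hε L hL using hloc
  obtain ⟨S, hSc, hSU⟩ := TopologicalSpace.isOpen_iUnion_countable
    (fun x : U => Metric.ball (x : EuclideanSpace ℝ (Fin d)) (ε x) ∩ U)
    (fun x => Metric.isOpen_ball.inter hU)
  have hcov : M ⊆ ⋃ i ∈ S, (Metric.ball (i : EuclideanSpace ℝ (Fin d)) (ε i) ∩ U) := by
    rw [hSU]
    intro x hx
    exact Set.mem_iUnion.2 ⟨⟨x, hM hx⟩, Metric.mem_ball_self (hε x (hM hx)), hM hx⟩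
  have himg : f '' M ⊆ ⋃ i ∈ S, f '' (M ∩ (Metric.ball (i : EuclideanSpace ℝ (Fin d)) (ε i) ∩ U)) := by
    rintro _ ⟨x, hx, rfl⟩
    obtain ⟨i, hiS, hxi⟩ := Set.mem_iUnion₂.1 (hcov hx)
    exact Set.mem_iUnion₂.2 ⟨i, hiS, ⟨x, ⟨hx, hxi⟩, rfl⟩⟩
  refine measure_mono_null himg ?_
  refine (measure_biUnion_null_iff hSc).2 fun i hi => ?_
  refine aux_lipOn_image_null ((hL i i.2).mono Set.inter_subset_right) ?_
  exact measure_mono_null Set.inter_subset_left hM0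

lemma div_le_div_of_nonneg_right' {a b c : ℝ} (h : a ≤ b) (hc : 0 < c) : a / c ≤ b / c :=
  (div_le_div_iff_of_pos_right hc).mpr h

set_option maxHeartbeats 1000000 in
/-- **Jacobian of the reversed flow is close to a ratio of porosities.** For every
`δ ∈ [0,T]` and a.e. `y ∈ Ω`, `|JF_{-δ}(y)| = φ(y)/φ(F_{-δ}(y)) + R(y)` with
`|R(y)| ≤ δ φ_*⁻¹ Γ_div C₁(T)`, `C₁(T) = (φ^*/φ_*) exp(Γ_div T / φ_*)`. -/
theorem jacobian_reversed_flow_close_to_porosity_ratio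
    {d : ℕ} (Ω : Set (EuclideanSpace ℝ (Fin d)))
    (hΩo : IsOpen Ω) (hΩb : Bornology.IsBounded Ω)
    (T φs φS Γdiv : ℝ) (hT : 0 < T) (hφs : 0 < φs)
    (φ : EuclideanSpace ℝ (Fin d) → ℝ) (hφm : Measurable φ)
    (hφ : ∀ᵐ x ∂(volume.restrict Ω), φs ≤ φ x ∧ φ x ≤ φS)
    (V : EuclideanSpace ℝ (Fin d) → EuclideanSpace ℝ (Fin d))
    (hVm : Measurable V) (hVb : ∃ M, ∀ x ∈ Ω, ‖V x‖ ≤ M)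
    (g : EuclideanSpace ℝ (Fin d) → ℝ) (hgm : Measurable g)
    (hgb : ∀ᵐ x ∂(volume.restrict Ω), |g x| ≤ Γdiv)
    (hdiv : ∀ ψ : EuclideanSpace ℝ (Fin d) → ℝ, ContDiff ℝ (⊤ : ℕ∞) ψ →
      ∫ x in Ω, (inner ℝ (gradient ψ x) (V x) : ℝ) = - ∫ x in Ω, ψ x * g x)
    (𝒞 : Set (EuclideanSpace ℝ (Fin d))) (h𝒞c : IsClosed 𝒞)
    (h𝒞0 : volume 𝒞 = 0) (h𝒞Ω : 𝒞 ⊆ Ω)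
    (F : ℝ → EuclideanSpace ℝ (Fin d) → EuclideanSpace ℝ (Fin d))
    (hFmaps : ∀ t ∈ Icc (-T) T, MapsTo (F t) (Ω \ 𝒞) (Ω \ 𝒞))
    (hF0 : ∀ x ∈ Ω \ 𝒞, F 0 x = x)
    (hFlip : ∀ x ∈ Ω \ 𝒞, ∃ L : NNReal, LipschitzOnWith L (fun t => F t x) (Icc (-T) T))
    (hFode : ∀ x ∈ Ω \ 𝒞, ∃ S : Set ℝ, S.Countable ∧ ∀ t ∈ Icc (-T) T \ S,
      HasDerivAt (fun τ => F τ x) ((φ (F t x))⁻¹ • V (F t x)) t)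
    (hFinj : ∀ t ∈ Icc (-T) T, InjOn (F t) (Ω \ 𝒞))
    (hFsurj : ∀ t ∈ Icc (-T) T, SurjOn (F t) (Ω \ 𝒞) (Ω \ 𝒞))
    (hFloclip : ∀ t ∈ Icc (-T) T, ∀ x ∈ Ω \ 𝒞, ∃ ε > (0:ℝ), ∃ L : NNReal,
      LipschitzOnWith L (F t) (Metric.ball x ε ∩ (Ω \ 𝒞)))
    (hFgrp : ∀ s ∈ Icc (-T) T, ∀ t ∈ Icc (-T) T, s + t ∈ Icc (-T) T →
      ∀ x ∈ Ω \ 𝒞, F (t + s) x = F t (F s x))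
    (J : ℝ → EuclideanSpace ℝ (Fin d) → ℝ)
    (hJ : ∀ t ∈ Icc (-T) T, ∀ᵐ x ∂(volume.restrict Ω),
      ∃ L : EuclideanSpace ℝ (Fin d) →L[ℝ] EuclideanSpace ℝ (Fin d),
        HasFDerivAt (F t) L x ∧
        J t x = LinearMap.det (L : EuclideanSpace ℝ (Fin d) →ₗ[ℝ] EuclideanSpace ℝ (Fin d)))
    -- Jacobian identity and bound, established for piecewise smooth `φ` and `V`:
    (hJid : ∀ᵐ x ∂(volume.restrict Ω), ∀ s ∈ Icc (-T) T,
      (∫ t in (0:ℝ)..s, |J t x| * g (F t x)) = φ (F s x) * |J s x| - φ x)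
    (hJbd : ∀ s ∈ Icc (-T) T, ∀ᵐ x ∂(volume.restrict Ω),
      |J s x| ≤ (φS / φs) * Real.exp (Γdiv * T / φs)) :
    ∀ δ ∈ Icc (0:ℝ) T, ∃ R : EuclideanSpace ℝ (Fin d) → ℝ,
      ∀ᵐ y ∂(volume.restrict Ω),
        |J (-δ) y| = φ y / φ (F (-δ) y) + R y ∧
        |R y| ≤ δ * φs⁻¹ * Γdiv * ((φS / φs) * Real.exp (Γdiv * T / φs)) := by
  classical
  intro δ hδ
  by_cases hΩ0 : volume Ω = 0
  · refine ⟨0, ?_⟩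
    rw [Measure.restrict_eq_zero.mpr hΩ0]
    simp
  -- main case
  have hres0 : volume.restrict Ω ≠ 0 := fun h => hΩ0 (Measure.restrict_eq_zero.mp h)
  have : (ae (volume.restrict Ω)).NeBot := ae_neBot.mpr hres0
  obtain ⟨x₀, hx₀φ, hx₀g⟩ := (hφ.and hgb).exists
  have hΓ0 : 0 ≤ Γdiv := (abs_nonneg _).trans hx₀g
  have hφsS : φs ≤ φS := hx₀φ.1.trans hx₀φ.2
  have hφS0 : 0 < φS := lt_of_lt_of_le hφs hφsS
  set C₁ : ℝ := (φS / φs) * Real.exp (Γdiv * T / φs) with hC₁def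
  have hC₁0 : 0 < C₁ := by positivity
  set U : Set (EuclideanSpace ℝ (Fin d)) := Ω \ 𝒞 with hUdef
  have hUo : IsOpen U := hΩo.sdiff h𝒞c
  have hUm : MeasurableSet U := hUo.measurableSet
  have hΩm : MeasurableSet Ω := hΩo.measurableSet
  have hTT : -T ≤ T := by linarith
  have h0I : (0:ℝ) ∈ Icc (-T) T := ⟨by linarith, le_of_lt hT⟩
  have hδI : -δ ∈ Icc (-T) T := ⟨by linarith [hδ.2], by linarith [hδ.1]⟩
  -- Lemma A : preimages of null sets along the flow are null
  have lemA : ∀ t ∈ Icc (-T) T, ∀ N : Set (EuclideanSpace ℝ (Fin d)), volume N = 0 →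
      volume {y | y ∈ U ∧ F t y ∈ N} = 0 := by
    intro t ht N hN
    have hmt : -t ∈ Icc (-T) T := ⟨by linarith [ht.2], by linarith [ht.1]⟩
    have hsub : {y | y ∈ U ∧ F t y ∈ N} ⊆ F (-t) '' (N ∩ U) := by
      rintro y ⟨hyU, hyN⟩
      refine ⟨F t y, ⟨hyN, hFmaps t ht hyU⟩, ?_⟩
      have hgr := hFgrp t ht (-t) hmt (by simpa using h0I) y hyU
      rw [neg_add_cancel] at hgr
      rw [← hgr, hF0 y hyU]
    refine measure_mono_null hsub (aux_image_null_of_locLip hUo (hFloclip (-t) hmt)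
      Set.inter_subset_right (measure_mono_null Set.inter_subset_left hN))
  -- the bad set where φ or g misbehave
  set N : Set (EuclideanSpace ℝ (Fin d)) :=
    {x | ¬ (φs ≤ φ x ∧ |g x| ≤ Γdiv)} ∩ Ω with hNdef
  have hNm : MeasurableSet N := by
    refine MeasurableSet.inter ?_ hΩm
    refine (MeasurableSet.inter ?_ ?_).compl
    · exact measurableSet_le measurable_const hφm
    · exact measurableSet_le hgm.abs measurable_const
  have hN0 : volume N = 0 := by
    have h1 : (volume.restrict Ω) {x | ¬ (φs ≤ φ x ∧ |g x| ≤ Γdiv)} = 0 := by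
      have h2 : ∀ᵐ x ∂(volume.restrict Ω), φs ≤ φ x ∧ |g x| ≤ Γdiv :=
        (hφ.and hgb).mono (fun x hx => ⟨hx.1.1, hx.2⟩)
      exact ae_iff.mp h2
    rwa [Measure.restrict_apply' hΩm] at h1
  -- jointly measurable version of the flow
  set Fm : ℝ → EuclideanSpace ℝ (Fin d) → EuclideanSpace ℝ (Fin d) :=
    fun t => U.piecewise (F ((projIcc (-T) T hTT t : Icc (-T) T) : ℝ)) id with hFmdef
  have hFcont : ∀ t ∈ Icc (-T) T, ContinuousOn (F t) U := by
    intro t ht x hx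
    obtain ⟨ε, hε, L, hL⟩ := hFloclip t ht x hx
    exact (hL.continuousOn.continuousAt
      ((Metric.isOpen_ball.inter hUo).mem_nhds ⟨Metric.mem_ball_self hε, hx⟩)).continuousWithinAt
  have hFmmeas : ∀ t, Measurable (Fm t) := by
    intro t
    exact ContinuousOn.measurable_piecewise
      (hFcont _ (projIcc (-T) T hTT t).2) continuousOn_id hUm
  have hFmcont : ∀ y, Continuous fun t => Fm t y := by
    intro y
    by_cases hy : y ∈ U
    · simp only [hFmdef, U.piecewise_eq_of_mem _ _ hy]
      obtain ⟨L, hL⟩ := hFlip y hy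
      exact hL.continuousOn.comp_continuous
        (continuous_subtype_val.comp continuous_projIcc) (fun t => (projIcc (-T) T hTT t).2)
    · simp only [hFmdef, U.piecewise_eq_of_notMem _ _ hy]
      exact continuous_const
  have hFmj : Measurable (Function.uncurry Fm) :=
    measurable_uncurry_of_continuous_of_measurable hFmcont hFmmeas
  -- bad set in product space
  set Bad : Set ((EuclideanSpace ℝ (Fin d)) × ℝ) :=
    {p | p.2 ∈ Icc (-T) T ∧ p.1 ∈ U ∧ Fm p.2 p.1 ∈ N} with hBdef
  have hBm : MeasurableSet Bad := by
    have hmap : Measurable fun p : (EuclideanSpace ℝ (Fin d)) × ℝ => Fm p.2 p.1 :=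
      hFmj.comp measurable_swap
    exact (measurable_snd measurableSet_Icc).inter
      ((measurable_fst hUm).inter (hmap hNm))
  have hBad0 : (volume.prod volume) Bad = 0 := by
    rw [Measure.prod_apply_symm hBm]
    have : ∀ t : ℝ, volume ((fun y : EuclideanSpace ℝ (Fin d) => (y, t)) ⁻¹' Bad) = 0 := by
      intro t
      by_cases ht : t ∈ Icc (-T) T
      · have hsec : ((fun y : EuclideanSpace ℝ (Fin d) => (y, t)) ⁻¹' Bad)
            ⊆ {y | y ∈ U ∧ F t y ∈ N} := by
          rintro y ⟨-, hyU, hyN⟩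
          refine ⟨hyU, ?_⟩
          simpa only [hFmdef, U.piecewise_eq_of_mem _ _ hyU, projIcc_of_mem hTT ht] using hyN
        exact measure_mono_null hsec (lemA t ht N hN0)
      · have : ((fun y : EuclideanSpace ℝ (Fin d) => (y, t)) ⁻¹' Bad) = ∅ := by
          ext y; simp only [Set.mem_preimage, Set.mem_empty_iff_false, iff_false]
          rintro ⟨h1, -⟩; exact ht h1
        simp [this]
    simp only [this, lintegral_const, zero_mul, mul_zero, lintegral_zero]
  have hsec : ∀ᵐ y ∂(volume : Measure (EuclideanSpace ℝ (Fin d))),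
      volume {t : ℝ | (y, t) ∈ Bad} = 0 := by
    have := (Measure.measure_prod_null hBm).mp hBad0
    filter_upwards [this] with y hy
    exact hy
  -- the a.e. goodness of F (-δ) y
  have hv : ∀ᵐ y ∂(volume : Measure (EuclideanSpace ℝ (Fin d))),
      ¬ (y ∈ U ∧ F (-δ) y ∈ N) := by
    have := lemA (-δ) hδI N hN0
    exact measure_eq_zero_iff_ae_notMem.mp this
  -- membership a.e.
  have haeU : ∀ᵐ y ∂(volume.restrict Ω), y ∈ U := by
    have h1 : ∀ᵐ y ∂(volume.restrict Ω), y ∈ Ω := ae_restrict_mem hΩm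
    have h2 : ∀ᵐ y ∂(volume.restrict Ω), y ∉ 𝒞 :=
      ae_restrict_of_ae (measure_eq_zero_iff_ae_notMem.mp h𝒞0)
    filter_upwards [h1, h2] with y hy1 hy2
    exact ⟨hy1, hy2⟩
  refine ⟨fun y => |J (-δ) y| - φ y / φ (F (-δ) y), ?_⟩
  filter_upwards [haeU, hφ, hJid, ae_restrict_of_ae hsec, ae_restrict_of_ae hv]
    with y hyU hyφ hyid hysec hyv
  have hFδU : F (-δ) y ∈ U := hFmaps (-δ) hδI hyU
  have hFδgood : φs ≤ φ (F (-δ) y) ∧ |g (F (-δ) y)| ≤ Γdiv := by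
    by_contra hcon
    exact hyv ⟨hyU, ⟨hcon, hFδU.1⟩⟩
  set c : ℝ := φ (F (-δ) y) with hcdef
  have hc : φs ≤ c := hFδgood.1
  have hcpos : 0 < c := lt_of_lt_of_le hφs hc
  constructor
  · field_simp; ring
  -- the remainder bound
  set W : ℝ → ℝ := fun t => |J t y| * g (F t y) with hWdef
  have hidδ : (∫ t in (0:ℝ)..(-δ), W t) = c * |J (-δ) y| - φ y := hyid (-δ) hδI
  set I : ℝ := ∫ t in (0:ℝ)..(-δ), W t with hIdef
  have hR : |J (-δ) y| - φ y / c = I / c := by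
    rw [hidδ, sub_div, mul_comm c, mul_div_assoc, div_self hcpos.ne', mul_one]
  rw [hR]
  have hsuff : |I| ≤ δ * Γdiv * C₁ → |I / c| ≤ δ * φs⁻¹ * Γdiv * C₁ := by
    intro hI
    rw [abs_div, abs_of_pos hcpos]
    calc |I| / c ≤ |I| / φs := by
          apply div_le_div_of_nonneg_left (abs_nonneg _) hφs hc
      _ ≤ (δ * Γdiv * C₁) / φs := by
          exact div_le_div_of_nonneg_right' hI hφs
      _ = δ * φs⁻¹ * Γdiv * C₁ := by ring
  refine hsuff ?_
  by_cases Hint : IntervalIntegrable W volume (-δ) 0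
  · -- integrable case
    -- a.e. good times
    have hQ : ∀ᵐ t : ℝ, t ∈ Icc (-T) T → (φs ≤ φ (F t y) ∧ |g (F t y)| ≤ Γdiv) := by
      rw [ae_iff]
      refine measure_mono_null ?_ hysec
      intro t ht
      simp only [Set.mem_setOf_eq] at ht
      rw [Classical.not_imp] at ht
      obtain ⟨ht1, ht2⟩ := ht
      refine ⟨ht1, hyU, ?_⟩
      have hFmeq : Fm t y = F t y := by
        simp only [hFmdef, U.piecewise_eq_of_mem _ _ hyU, projIcc_of_mem hTT ht1]
      rw [hFmeq]
      exact ⟨ht2, (hFmaps t ht1 hyU).1⟩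
    have hQn : ∀ᵐ s : ℝ, -s ∈ Icc (-T) T → (φs ≤ φ (F (-s) y) ∧ |g (F (-s) y)| ≤ Γdiv) := by
      rw [ae_iff]
      have hpre := (Measure.measurePreserving_neg
        (volume : Measure ℝ)).quasiMeasurePreserving.preimage_null (ae_iff.mp hQ)
      exact measure_mono_null (fun s hs => hs) hpre
    have hδ0 : (0:ℝ) ≤ δ := hδ.1
    set hh : ℝ → ℝ := fun s => |W (-s)| with hhdef
    have hhint : IntervalIntegrable hh volume 0 δ := by
      have h1 := (IntervalIntegrable.iff_comp_neg).mp Hint.abs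
      simpa using h1.symm
    set A : ℝ → ℝ := fun t => ∫ s in (0:ℝ)..t, hh s with hAdef
    have hAeq : ∀ t : ℝ, A t = ∫ u in (-t)..(0:ℝ), |W u| := by
      intro t
      have h1 := intervalIntegral.integral_comp_neg (a := (0:ℝ)) (b := t) (fun u => |W u|)
      simpa using h1
    have hAint : ∀ t ∈ Icc (0:ℝ) δ, IntervalIntegrable hh volume 0 t := by
      intro t ht
      refine hhint.mono_set ?_
      rw [uIcc_of_le ht.1, uIcc_of_le hδ0]
      exact Icc_subset_Icc le_rfl ht.2
    have hAmono : ∀ s t : ℝ, 0 ≤ s → s ≤ t → t ≤ δ → A s ≤ A t := by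
      intro s t hs hst htδ
      exact intervalIntegral.integral_mono_interval le_rfl hs hst
        (Filter.Eventually.of_forall (fun u => abs_nonneg _)) (hAint t ⟨hs.trans hst, htδ⟩)
    have hA0 : A 0 = 0 := intervalIntegral.integral_same
    have hAnn : ∀ t ∈ Icc (0:ℝ) δ, 0 ≤ A t := fun t ht =>
      hA0 ▸ hAmono 0 t le_rfl ht.1 ht.2
    have hAcont : ContinuousOn A (Icc 0 δ) := by
      have h1 : IntegrableOn hh (uIcc 0 δ) volume := by
        rw [uIcc_of_le hδ0]
        exact (intervalIntegrable_iff_integrableOn_Icc_of_le hδ0).mp hhint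
      simpa [uIcc_of_le hδ0] using intervalIntegral.continuousOn_primitive_interval h1
    set cl : ℝ → ℝ := fun t => max 0 (min t δ) with hcldef
    have hclmem : ∀ t, cl t ∈ Icc (0:ℝ) δ := fun t =>
      ⟨le_max_left _ _, max_le hδ0 (min_le_right _ _)⟩
    have hcl_eq : ∀ t ∈ Icc (0:ℝ) δ, cl t = t := by
      intro t ht
      rw [hcldef]
      simp only
      rw [min_eq_left ht.2, max_eq_right ht.1]
    set Am : ℝ → ℝ := fun t => A (cl t) with hAmdef
    have hAmcont : Continuous Am :=
      hAcont.comp_continuous (continuous_const.max (continuous_id.min continuous_const)) hclmem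
    have hAmnn : ∀ t, 0 ≤ Am t := fun t => hAnn _ (hclmem t)
    have hAm_eq : ∀ t ∈ Icc (0:ℝ) δ, Am t = A t := by
      intro t ht
      rw [hAmdef]
      simp only
      rw [hcl_eq t ht]
    set K : ℝ := Γdiv / φs with hKdef
    have hK0 : 0 ≤ K := div_nonneg hΓ0 hφs.le
    have hφy : φs ≤ φ y := hyφ.1
    have hφy0 : 0 ≤ φ y := hφs.le.trans hφy
    set w : ℝ → ℝ := fun s => K * (φ y + Am s) with hwdef
    have hwcont : Continuous w := continuous_const.mul (continuous_const.add hAmcont)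
    have hwnn : ∀ s, 0 ≤ w s := fun s => mul_nonneg hK0 (add_nonneg hφy0 (hAmnn s))
    set Bf : ℝ → ℝ := fun t => ∫ s in (0:ℝ)..t, w s with hBfdef
    have hBderiv : ∀ t, HasDerivAt Bf (w t) t := fun t =>
      intervalIntegral.integral_hasDerivAt_right (hwcont.intervalIntegrable _ _)
        hwcont.aestronglyMeasurable.stronglyMeasurableAtFilter hwcont.continuousAt
    have hBcont : Continuous Bf := continuous_iff_continuousAt.mpr fun t => (hBderiv t).continuousAt
    have hBf0 : Bf 0 = 0 := intervalIntegral.integral_same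
    -- core a.e. estimate
    have hcore : ∀ᵐ s : ℝ, s ∈ Icc (0:ℝ) δ →
        (φs * |J (-s) y| ≤ φ y + Am s ∧ |g (F (-s) y)| ≤ Γdiv) := by
      filter_upwards [hQn] with s hQs hs
      have hnsI : -s ∈ Icc (-T) T := ⟨by linarith [hs.2, hδ.2], by linarith [hs.1]⟩
      obtain ⟨hφF, hgF⟩ := hQs hnsI
      have idty := hyid (-s) hnsI
      have hu : |∫ t in (0:ℝ)..(-s), W t| ≤ A s := by
        rw [intervalIntegral.integral_symm (-s) 0, abs_neg]
        refine le_trans (intervalIntegral.abs_integral_le_integral_abs (by linarith [hs.1])) ?_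
        rw [hAeq s]
      have h1 : φ (F (-s) y) * |J (-s) y| ≤ φ y + A s := by
        have h2 := le_abs_self (∫ t in (0:ℝ)..(-s), W t)
        linarith [idty, hu]
      have h2 : φs * |J (-s) y| ≤ φ (F (-s) y) * |J (-s) y| :=
        mul_le_mul_of_nonneg_right hφF (abs_nonneg _)
      refine ⟨?_, hgF⟩
      rw [hAm_eq s hs]
      linarith
    have hkey : ∀ᵐ s : ℝ, s ∈ Icc (0:ℝ) δ → hh s ≤ w s := by
      filter_upwards [hcore] with s hc hs
      obtain ⟨h1, h2⟩ := hc hs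
      have heq : hh s = |J (-s) y| * |g (F (-s) y)| := by
        rw [hhdef]
        simp only
        rw [hWdef]
        simp only
        rw [abs_mul, abs_abs]
      rw [heq, hwdef]
      simp only
      calc |J (-s) y| * |g (F (-s) y)| ≤ |J (-s) y| * Γdiv :=
            mul_le_mul_of_nonneg_left h2 (abs_nonneg _)
        _ ≤ ((φ y + Am s) / φs) * Γdiv := by
            refine mul_le_mul_of_nonneg_right ?_ hΓ0
            rw [le_div_iff₀ hφs]
            linarith
        _ = K * (φ y + Am s) := by rw [hKdef]; ring
    have hAB : ∀ t ∈ Icc (0:ℝ) δ, A t ≤ Bf t := by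
      intro t ht
      have hres : hh ≤ᵐ[volume.restrict (Icc 0 t)] w := by
        filter_upwards [ae_restrict_of_ae hkey, ae_restrict_mem measurableSet_Icc]
          with s hs1 hs2
        exact hs1 ⟨hs2.1, hs2.2.trans ht.2⟩
      exact intervalIntegral.integral_mono_ae_restrict ht.1 (hAint t ht)
        (hwcont.intervalIntegrable _ _) hres
    have hgron : ∀ x ∈ Icc (0:ℝ) δ, ‖Bf x‖ ≤ gronwallBound 0 K (K * φ y) (x - 0) := by
      apply norm_le_gronwallBound_of_norm_deriv_right_le hBcont.continuousOn
        (fun x _ => (hBderiv x).hasDerivWithinAt) (by simp [hBf0])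
      intro x hx
      have hAx : Am x ≤ Bf x := by
        rw [hAm_eq x ⟨hx.1, hx.2.le⟩]
        exact hAB x ⟨hx.1, hx.2.le⟩
      rw [Real.norm_eq_abs, Real.norm_eq_abs, abs_of_nonneg (hwnn x), hwdef]
      simp only
      have h3 : K * Am x ≤ K * |Bf x| :=
        mul_le_mul_of_nonneg_left (hAx.trans (le_abs_self _)) hK0
      nlinarith [h3]
    have hgbd : ∀ x : ℝ, gronwallBound 0 K (K * φ y) x ≤ φ y * (Real.exp (K * x) - 1) := by
      intro x
      by_cases hK : K = 0
      · rw [hK, gronwallBound_K0]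
        simp
      · rw [gronwallBound_of_K_ne_0 hK]
        show (0:ℝ) * Real.exp (K * x) + K * φ y / K * (Real.exp (K * x) - 1)
            ≤ φ y * (Real.exp (K * x) - 1)
        have heq : (0:ℝ) * Real.exp (K * x) + K * φ y / K * (Real.exp (K * x) - 1)
            = φ y * (Real.exp (K * x) - 1) := by
          field_simp; ring
        exact le_of_eq heq
    have hAbd : ∀ x ∈ Icc (0:ℝ) δ, φ y + A x ≤ φS * Real.exp (Γdiv * T / φs) := by
      intro x hx
      have h1 : A x ≤ Bf x := hAB x hx
      have h3 := hgron x hx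
      rw [Real.norm_eq_abs] at h3
      have h4 : Bf x ≤ gronwallBound 0 K (K * φ y) (x - 0) := (le_abs_self _).trans h3
      have h5 := hgbd (x - 0)
      have h6 : φ y + A x ≤ φ y * Real.exp (K * (x - 0)) := by linarith
      have h7 : Real.exp (K * (x - 0)) ≤ Real.exp (Γdiv * T / φs) := by
        apply Real.exp_le_exp.mpr
        have h8 : K * (x - 0) ≤ K * T :=
          mul_le_mul_of_nonneg_left (by linarith [hx.2, hδ.2]) hK0
        calc K * (x - 0) ≤ K * T := h8
          _ = Γdiv * T / φs := by rw [hKdef]; ring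
      calc φ y + A x ≤ φ y * Real.exp (K * (x - 0)) := h6
        _ ≤ φS * Real.exp (Γdiv * T / φs) :=
            mul_le_mul hyφ.2 h7 (Real.exp_nonneg _) hφS0.le
    have hfin : ∀ᵐ s : ℝ, s ∈ Icc (0:ℝ) δ → hh s ≤ Γdiv * C₁ := by
      filter_upwards [hcore] with s hc hs
      obtain ⟨h1, h2⟩ := hc hs
      have heq : hh s = |J (-s) y| * |g (F (-s) y)| := by
        rw [hhdef]
        simp only
        rw [hWdef]
        simp only
        rw [abs_mul, abs_abs]
      rw [heq]
      have hJb : |J (-s) y| ≤ C₁ := by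
        have h3 := hAbd s hs
        rw [← hAm_eq s hs] at h3
        rw [hC₁def, div_mul_eq_mul_div, le_div_iff₀ hφs]
        nlinarith [h1, h3]
      calc |J (-s) y| * |g (F (-s) y)| ≤ |J (-s) y| * Γdiv :=
            mul_le_mul_of_nonneg_left h2 (abs_nonneg _)
        _ ≤ C₁ * Γdiv := mul_le_mul_of_nonneg_right hJb hΓ0
        _ = Γdiv * C₁ := mul_comm _ _
    have hIA : |I| ≤ A δ := by
      rw [hIdef, intervalIntegral.integral_symm (-δ) 0, abs_neg]
      refine le_trans (intervalIntegral.abs_integral_le_integral_abs (by linarith)) ?_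
      rw [hAeq δ]
    have hAδ : A δ ≤ δ * (Γdiv * C₁) := by
      have hres : hh ≤ᵐ[volume.restrict (Icc (0:ℝ) δ)] fun _ => Γdiv * C₁ := by
        filter_upwards [ae_restrict_of_ae hfin, ae_restrict_mem measurableSet_Icc]
          with s h1 h2
        exact h1 h2
      have h9 := intervalIntegral.integral_mono_ae_restrict hδ0 hhint
        intervalIntegrable_const hres
      rw [intervalIntegral.integral_const] at h9
      calc A δ ≤ (δ - 0) • (Γdiv * C₁) := h9
        _ = δ * (Γdiv * C₁) := by rw [smul_eq_mul, sub_zero]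
    calc |I| ≤ δ * (Γdiv * C₁) := hIA.trans hAδ
      _ = δ * Γdiv * C₁ := by ring
  · -- non-integrable case : the integral is zero
    have h2 : ¬ IntervalIntegrable W volume 0 (-δ) := fun h => Hint h.symm
    have hI0 : I = 0 := by rw [hIdef]; exact intervalIntegral.integral_undef h2
    rw [hI0, abs_zero]
    have := mul_nonneg (mul_nonneg hδ.1 hΓ0) hC₁0.le
    linarith
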